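/- Let Q_d be the hypercube on {0,1}^d with bipartition classes E and O, each of size 2^{d−1}. For integers t and f with 0 ≤ f < t/2 and f·d ≤ 2^{d−1} − t, the number of independent sets of size t in Q_d satisfies i_t(Q_d) ≥ 2 · Σ_A C(2^{d−1} − d|A|, t − |A|), where the sum is over all sets A ⊆ E with |A| ≤ f such that no two vertices of A have a common neighbour (i.e. cl(A) ≤ 1). -/

import Mathlib

open Finset

/-- The discrete hypercube `Q_d`. -/
def cube (d : ℕ) : SimpleGraph (Fin d → Bool) where
  Adj x y := (Finset.univ.filter fun i => x i ≠ y i).card = 1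
  symm := by
    constructor
    intro x y h
    simpa [ne_comm] using h
  loopless := by
    constructor
    intro x h
    simp at h

instance (d : ℕ) : DecidableRel (cube d).Adj := fun _ _ => by
  unfold cube
  infer_instance

/-- Number of independent sets of size `t`. -/
def numIndep {V : Type*} [Fintype V] [DecidableEq V] (G : SimpleGraph V)
    [DecidableRel G.Adj] (t : ℕ) : ℕ :=
  (Finset.univ.powerset.filter
    (fun s : Finset V => s.card = t ∧ ∀ u ∈ s, ∀ v ∈ s, ¬ G.Adj u v)).card

/-- A vertex of the hypercube has even weight. -/
def evenWt {d : ℕ} (x : Fin d → Bool) : Prop :=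
  (Finset.univ.filter fun i => x i = true).card % 2 = 0

instance {d : ℕ} : DecidablePred (evenWt (d := d)) := fun _ => by
  unfold evenWt
  infer_instance

/-- The even bipartition class of `Q_d`. -/
def evenClass (d : ℕ) : Finset (Fin d → Bool) := Finset.univ.filter evenWt

/-- No two vertices of `A` have a common neighbour (i.e. `cl(A) ≤ 1`). -/
def noCommonNbr (d : ℕ) (A : Finset (Fin d → Bool)) : Prop :=
  ∀ x ∈ A, ∀ y ∈ A, x ≠ y → ∀ w, ¬ ((cube d).Adj w x ∧ (cube d).Adj w y)

instance (d : ℕ) (A : Finset (Fin d → Bool)) : Decidable (noCommonNbr d A) := by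
  unfold noCommonNbr
  infer_instance


/-!
For `A ⊆ E`, adding to `A` any `(t - |A|)`-subset of `O \ N(A)` gives an independent `t`-set
with even part `A`. Since `|N(A)| ≤ d|A|` and `|O| = 2^{d-1}`, every `A ⊆ E` with `|A| ≤ f` is
the even part of at least `C(2^{d-1} - d|A|, t - |A|)` independent `t`-sets, and distinct `A`
give distinct sets. Flipping one coordinate is an automorphism of `Q_d`
exchanging `E` and `O`, so equally many independent `t`-sets have at most `f` odd vertices, and
as `2f < t` no set is counted twice.
-/

section Hamming

variable {ι : Type*}

lemma card_filter_true_add_card_filter_true [Fintype ι] (x y : ι → Bool) :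
    #{i | x i = true} + #{i | y i = true} =
      hammingDist x y + 2 * #{i | x i = true ∧ y i = true} := by
  simp only [hammingDist, card_filter, mul_sum, ← sum_add_distrib]
  refine sum_congr rfl fun i _ => ?_
  cases x i <;> cases y i <;> rfl

variable [DecidableEq ι]

def flipAt (i : ι) (x : ι → Bool) : ι → Bool := fun j => if j = i then !x j else x j

lemma flipAt_involutive (i : ι) : Function.Involutive (flipAt i) := by
  intro x
  funext j
  unfold flipAt
  split_ifs <;> simp

variable [Fintype ι]

lemma hammingDist_flipAt_flipAt (i : ι) (x y : ι → Bool) :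
    hammingDist (flipAt i x) (flipAt i y) = hammingDist x y :=
  hammingDist_comp (fun j (b : Bool) => if j = i then !b else b) fun j a b h => by
    split_ifs at h <;> simpa using h

lemma hammingDist_flipAt (i : ι) (x : ι → Bool) : hammingDist x (flipAt i x) = 1 := by
  rw [hammingDist, card_eq_one]
  refine ⟨i, ?_⟩
  ext j
  by_cases h : j = i <;> simp [flipAt, h]

lemma exists_eq_flipAt_of_hammingDist_eq_one {x y : ι → Bool} (h : hammingDist x y = 1) :
    ∃ i, y = flipAt i x := by
  obtain ⟨i, hi⟩ := card_eq_one.mp h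
  refine ⟨i, funext fun j => ?_⟩
  have hj : x j ≠ y j ↔ j = i := by simpa using Finset.ext_iff.mp hi j
  unfold flipAt
  split_ifs with hji
  · cases hx : x j <;> cases hy : y j <;> simp_all
  · simpa [hji, eq_comm] using hj

end Hamming

namespace SimpleGraph

variable {V : Type*} [Fintype V] [DecidableEq V]

section IndepSets

variable (G : SimpleGraph V) [DecidableRel G.Adj]

def indepSets (t : ℕ) : Finset (Finset V) :=
  univ.powerset.filter fun s => #s = t ∧ ∀ u ∈ s, ∀ v ∈ s, ¬ G.Adj u v

lemma numIndep_eq_card_indepSets (t : ℕ) : numIndep G t = #(G.indepSets t) := rfl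

variable {G} {t f : ℕ}

lemma mem_indepSets {s : Finset V} :
    s ∈ G.indepSets t ↔ #s = t ∧ ∀ u ∈ s, ∀ v ∈ s, ¬ G.Adj u v := by
  simp [indepSets]

variable (p : V → Prop) [DecidablePred p]

lemma card_filter_add_card_filter_not_le_card_indepSets (hf : 2 * f < t) :
    #{s ∈ G.indepSets t | #(s.filter p) ≤ f} + #{s ∈ G.indepSets t | #(s.filter (¬ p ·)) ≤ f} ≤
      #(G.indepSets t) := by
  rw [← card_union_of_disjoint]
  · exact card_le_card (union_subset (filter_subset _ _) (filter_subset _ _))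
  refine disjoint_filter.mpr fun s hs hp hnp => ?_
  have hsplit := card_filter_add_card_filter_not (s := s) p
  rw [(mem_indepSets.mp hs).1] at hsplit
  omega

lemma card_indepSets_filter_eq_of_iso (φ : G ≃g G) (hφ : ∀ x, p (φ x) ↔ ¬ p x) :
    #{s ∈ G.indepSets t | #(s.filter p) ≤ f} =
      #{s ∈ G.indepSets t | #(s.filter (¬ p ·)) ≤ f} := by
  refine card_equiv φ.toEquiv.finsetCongr fun s => ?_
  have hfilter : (s.map φ.toEquiv.toEmbedding).filter (¬ p ·) =
      (s.filter p).map φ.toEquiv.toEmbedding := by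
    rw [filter_map]
    congr 1
    exact filter_congr fun x _ => by simp [hφ]
  simp only [mem_filter, mem_indepSets, Equiv.finsetCongr_apply, hfilter, card_map,
    forall_mem_map]
  simp [Iso.map_adj_iff]

lemma two_mul_card_indepSets_filter_le_numIndep (φ : G ≃g G) (hφ : ∀ x, p (φ x) ↔ ¬ p x)
    (hf : 2 * f < t) : 2 * #{s ∈ G.indepSets t | #(s.filter p) ≤ f} ≤ numIndep G t := by
  have := card_filter_add_card_filter_not_le_card_indepSets p hf (G := G)
  rw [← card_indepSets_filter_eq_of_iso p φ hφ] at this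
  rw [numIndep_eq_card_indepSets]
  omega

end IndepSets

section Bipartite

variable {G : SimpleGraph V} [DecidableRel G.Adj] {p : V → Prop} {t f : ℕ}

lemma union_mem_indepSets (hbip : ∀ x y, G.Adj x y → (p x ↔ ¬ p y)) {A B : Finset V}
    (hA : ∀ a ∈ A, p a) (hB : ∀ b ∈ B, ¬ p b ∧ ∀ a ∈ A, ¬ G.Adj a b) (hcard : #A + #B = t) :
    A ∪ B ∈ G.indepSets t := by
  have hdisj : Disjoint A B := Finset.disjoint_left.mpr fun a ha hb => (hB a hb).1 (hA a ha)
  refine mem_indepSets.mpr ⟨(card_union_of_disjoint hdisj).trans hcard, ?_⟩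
  intro u hu v hv huv
  rcases mem_union.mp hu with hu | hu <;> rcases mem_union.mp hv with hv | hv
  · exact (hbip u v huv).mp (hA u hu) (hA v hv)
  · exact (hB v hv).2 u hu huv
  · exact (hB u hu).2 v hv huv.symm
  · exact (hB u hu).1 ((hbip u v huv).mpr (hB v hv).1)

variable [DecidablePred p]

lemma choose_le_card_indepSets_filter_eq (hbip : ∀ x y, G.Adj x y → (p x ↔ ¬ p y))
    {A O : Finset V} (hA : ∀ a ∈ A, p a) (hO : ∀ b ∈ O, ¬ p b ∧ ∀ a ∈ A, ¬ G.Adj a b)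
    (hAt : #A ≤ t) : (#O).choose (t - #A) ≤ #{s ∈ G.indepSets t | s.filter p = A} := by
  have hfilter : ∀ B ⊆ O, (A ∪ B).filter p = A ∧ (A ∪ B).filter (¬ p ·) = B := fun B hB => by
    rw [filter_union, filter_union, filter_true_of_mem hA,
      filter_false_of_mem fun b hb => (hO b (hB hb)).1,
      filter_false_of_mem fun a ha => not_not.mpr (hA a ha),
      filter_true_of_mem fun b hb => (hO b (hB hb)).1, union_empty, empty_union]
    exact ⟨rfl, rfl⟩
  rw [← card_powersetCard]
  refine card_le_card_of_injOn (A ∪ ·) (fun B hB => ?_) fun B₁ hB₁ B₂ hB₂ h => ?_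
  · obtain ⟨hBO, hBcard⟩ := mem_powersetCard.mp hB
    exact mem_filter.mpr ⟨union_mem_indepSets hbip hA (fun b hb => hO b (hBO hb)) (by omega),
      (hfilter B hBO).1⟩
  · rw [← (hfilter B₁ (mem_powersetCard.mp hB₁).1).2, ← (hfilter B₂ (mem_powersetCard.mp hB₂).1).2]
    exact congrArg _ h

lemma sum_choose_le_card_indepSets_filter (hbip : ∀ x y, G.Adj x y → (p x ↔ ¬ p y))
    (hft : f < t) (𝒜 : Finset (Finset V)) (h𝒜 : ∀ A ∈ 𝒜, (∀ a ∈ A, p a) ∧ #A ≤ f) :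
    ∑ A ∈ 𝒜, (#(univ.filter (¬ p ·) \ A.biUnion (G.neighborFinset ·))).choose (t - #A) ≤
      #{s ∈ G.indepSets t | #(s.filter p) ≤ f} := calc
  _ ≤ ∑ A ∈ 𝒜, #{s ∈ G.indepSets t | s.filter p = A} := by
    refine sum_le_sum fun A hA => choose_le_card_indepSets_filter_eq hbip (h𝒜 A hA).1
      (fun b hb => ?_) ((h𝒜 A hA).2.trans hft.le)
    simp only [mem_sdiff, mem_filter, mem_univ, true_and, mem_biUnion, mem_neighborFinset,
      not_exists, not_and] at hb
    exact hb
  _ = #{s ∈ G.indepSets t | s.filter p ∈ 𝒜} := sum_card_fiberwise_eq_card_filter _ _ _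
  _ ≤ #{s ∈ G.indepSets t | #(s.filter p) ≤ f} := card_le_card fun s hs => by
    rw [mem_filter] at hs ⊢
    exact ⟨hs.1, (h𝒜 _ hs.2).2⟩

end Bipartite

end SimpleGraph

section Hypercube

variable {d : ℕ}

lemma cube_adj_iff {x y : Fin d → Bool} : (cube d).Adj x y ↔ hammingDist x y = 1 := Iff.rfl

lemma evenWt_iff_not_of_cube_adj {x y : Fin d → Bool} (h : (cube d).Adj x y) :
    evenWt x ↔ ¬ evenWt y := by
  have := card_filter_true_add_card_filter_true x y
  rw [cube_adj_iff.mp h] at this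
  unfold evenWt
  omega

def cubeFlip (i : Fin d) : cube d ≃g cube d where
  toEquiv := (flipAt_involutive i).toPerm
  map_rel_iff' := by simp [cube_adj_iff, hammingDist_flipAt_flipAt]

lemma evenWt_cubeFlip (i : Fin d) (x : Fin d → Bool) : evenWt (cubeFlip i x) ↔ ¬ evenWt x :=
  iff_not_comm.mp (evenWt_iff_not_of_cube_adj (cube_adj_iff.mpr (hammingDist_flipAt i x)))

lemma card_neighborFinset_cube_le (x : Fin d → Bool) : #((cube d).neighborFinset x) ≤ d := calc
  _ ≤ #(univ.image fun i => flipAt i x) := card_le_card fun y hy => by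
    obtain ⟨i, rfl⟩ :=
      exists_eq_flipAt_of_hammingDist_eq_one (((cube d).mem_neighborFinset x y).mp hy)
    exact mem_image_of_mem _ (mem_univ i)
  _ ≤ d := card_image_le.trans (by simp)

lemma card_filter_not_evenWt (hd : 1 ≤ d) : #{x : Fin d → Bool | ¬ evenWt x} = 2 ^ (d - 1) := by
  have hswap : #(univ.filter (evenWt (d := d))) = #{x : Fin d → Bool | ¬ evenWt x} :=
    card_equiv (cubeFlip ⟨0, hd⟩).toEquiv fun x => by simp [evenWt_cubeFlip]
  have hsplit := card_filter_add_card_filter_not (s := (univ : Finset (Fin d → Bool))) evenWt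
  rw [card_univ, Fintype.card_fun, Fintype.card_bool, Fintype.card_fin,
    ← Nat.two_pow_pred_add_two_pow_pred hd] at hsplit
  omega

lemma le_card_filter_not_evenWt_sdiff (hd : 1 ≤ d) (A : Finset (Fin d → Bool)) :
    2 ^ (d - 1) - d * #A ≤
      #(univ.filter (¬ evenWt ·) \ A.biUnion ((cube d).neighborFinset ·)) := calc
  _ ≤ #(univ.filter (¬ evenWt ·)) - #(A.biUnion ((cube d).neighborFinset ·)) := by
    rw [card_filter_not_evenWt hd]
    refine Nat.sub_le_sub_left (card_biUnion_le.trans ?_) _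
    simpa [mul_comm] using sum_le_card_nsmul A _ d fun x _ => card_neighborFinset_cube_le x
  _ ≤ _ := le_card_sdiff _ _

end Hypercube

theorem stmt_19_general (d t f : ℕ) (hd : 1 ≤ d) (hf : 2 * f < t) :
    2 * ∑ A ∈ (evenClass d).powerset.filter
          (fun A => A.card ≤ f ∧ noCommonNbr d A),
        Nat.choose (2 ^ (d - 1) - d * A.card) (t - A.card) ≤
      numIndep (cube d) t := calc
  _ ≤ 2 * ∑ A ∈ (evenClass d).powerset.filter (fun A => A.card ≤ f ∧ noCommonNbr d A),
        (#(univ.filter (¬ evenWt ·) \ A.biUnion ((cube d).neighborFinset ·))).choose (t - #A) := by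
    gcongr with A
    exact le_card_filter_not_evenWt_sdiff hd A
  _ ≤ 2 * #{s ∈ (cube d).indepSets t | #(s.filter evenWt) ≤ f} := by
    refine Nat.mul_le_mul_left 2 (SimpleGraph.sum_choose_le_card_indepSets_filter
      (fun _ _ => evenWt_iff_not_of_cube_adj) (by omega) _ fun A hA => ?_)
    simp only [mem_filter, mem_powerset, evenClass, subset_iff] at hA
    exact ⟨fun a ha => (hA.1 ha).2, hA.2.1⟩
  _ ≤ numIndep (cube d) t :=
    (cube d).two_mul_card_indepSets_filter_le_numIndep evenWt (cubeFlip ⟨0, hd⟩) (evenWt_cubeFlip _) hf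

theorem stmt_19 (d t f : ℕ) (hd : 1 ≤ d) (hf : 2 * f < t) (hfd : f * d + t ≤ 2 ^ (d - 1)) :
    2 * ∑ A ∈ (evenClass d).powerset.filter
          (fun A => A.card ≤ f ∧ noCommonNbr d A),
        Nat.choose (2 ^ (d - 1) - d * A.card) (t - A.card) ≤
      numIndep (cube d) t :=
  stmt_19_general d t f hd hf
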